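/- Let 𝔤 be a finite-dimensional real semisimple Lie algebra, let (𝔭, 𝔮) and (𝔭′, 𝔮′) be complementary pairs of height-one parabolic subalgebras of 𝔤, and suppose there is a Lie algebra automorphism h of 𝔤 with h(𝔭) = 𝔭′. Then there exists a Lie algebra automorphism g of 𝔤 with g(𝔭) = 𝔭′ and g(𝔮) = 𝔮′; indeed g may be taken of the form h ∘ exp(ad x) for some x ∈ 𝔭^⊥. (Thus the adjoint group acts transitively on the space Z of complementary pairs.) -/

import Mathlib

open LieAlgebra Module

variable {L : Type*} [LieRing L] [LieAlgebra ℝ L]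

/-- The Killing polar `𝔭^⊥` of a Lie subalgebra. -/
def killingPolar (p : LieSubalgebra ℝ L) : Submodule ℝ L where
  carrier := {x | ∀ y ∈ p, killingForm ℝ L x y = 0}
  add_mem' := fun ha hb => fun y hy => by simp [ha y hy, hb y hy]
  zero_mem' := fun y hy => by simp
  smul_mem' := fun c a ha => fun y hy => by simp [ha y hy]

/-- A height-one parabolic subalgebra: the Killing polar is an abelian subalgebra. -/
def IsH1Parabolic (p : LieSubalgebra ℝ L) : Prop :=
  ∀ x ∈ killingPolar p, ∀ y ∈ killingPolar p, ⁅x, y⁆ = (0 : L)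

/-- Complementary pair of height-one parabolic subalgebras. -/
def ComplPair (p q : LieSubalgebra ℝ L) : Prop :=
  IsCompl p.toSubmodule (killingPolar q) ∧ IsCompl q.toSubmodule (killingPolar p)

/-- `exp (ad z)`, the finite exponential series of the adjoint action. -/
noncomputable def expAd [Module.Finite ℝ L] (z : L) : Module.End ℝ L :=
  ∑ k ∈ Finset.range (Module.finrank ℝ L + 1), (k.factorial : ℝ)⁻¹ • (ad ℝ L z) ^ k

/-!
A complementary pair `(𝔭, 𝔮)` grades `𝔤 = 𝔮^⊥ ⊕ (𝔭 ∩ 𝔮) ⊕ 𝔭^⊥` in degrees `-1, 0, 1`. The degree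
operator is a derivation, hence inner, `ad E`, and `𝔮 = ker (ad E ^ 2 + ad E)`. For two complements
`𝔮₀, 𝔮₁` of the same `𝔭` with grading elements `E₀, E₁`, the difference `x = E₀ - E₁` lies in `𝔭^⊥`
(the part of it in `𝔭 ∩ 𝔮₁` is central), and `exp (ad x) E₀ = E₁`; so `exp (ad x)` fixes `𝔭` and
carries `𝔮₀ = ker (ad E₀ ^ 2 + ad E₀)` onto `𝔮₁`. Apply this to `𝔮` and `h⁻¹ 𝔮′`.
-/

lemma killingPolar_eq_orthogonal (p : LieSubalgebra ℝ L) :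
    killingPolar p = (killingForm ℝ L).orthogonal p.toSubmodule := by
  ext x
  exact forall₂_congr fun y _ => by rw [LieModule.traceForm_comm]

lemma lie_mem_killingPolar {p : LieSubalgebra ℝ L} {x a : L} (hx : x ∈ killingPolar p)
    (ha : a ∈ p) : ⁅x, a⁆ ∈ killingPolar p := fun y hy => by
  rw [LieModule.traceForm_apply_lie_apply]
  exact hx _ (p.lie_mem ha hy)

lemma lie_mem_killingPolar' {p : LieSubalgebra ℝ L} {x a : L} (ha : a ∈ p)
    (hx : x ∈ killingPolar p) : ⁅a, x⁆ ∈ killingPolar p := by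
  rw [← lie_skew]
  exact neg_mem (lie_mem_killingPolar hx ha)

section Transport

variable (e : L ≃ₗ⁅ℝ⁆ L)

lemma mem_killingPolar_map_iff {p : LieSubalgebra ℝ L} {x : L} :
    x ∈ killingPolar (p.map (e : L →ₗ⁅ℝ⁆ L)) ↔ e.symm x ∈ killingPolar p := by
  constructor
  · intro hx y hy
    have h := hx (e y) ⟨y, hy, rfl⟩
    rwa [← e.apply_symm_apply x, killingForm_of_equiv_apply] at h
  · rintro hx _ ⟨y, hy, rfl⟩
    change killingForm ℝ L x (e y) = 0
    rw [← e.apply_symm_apply x, killingForm_of_equiv_apply]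
    exact hx y hy

lemma killingPolar_map (p : LieSubalgebra ℝ L) :
    killingPolar (p.map (e : L →ₗ⁅ℝ⁆ L)) = (killingPolar p).map (e.toLinearEquiv : L →ₗ[ℝ] L) := by
  ext x
  rw [Submodule.mem_map_equiv]
  exact mem_killingPolar_map_iff e

lemma IsH1Parabolic.map {p : LieSubalgebra ℝ L} (hp : IsH1Parabolic p) :
    IsH1Parabolic (p.map (e : L →ₗ⁅ℝ⁆ L)) := by
  intro x hx y hy
  rw [mem_killingPolar_map_iff] at hx hy
  rw [← e.apply_symm_apply x, ← e.apply_symm_apply y, ← LieEquiv.map_lie, hp _ hx _ hy,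
    map_zero]

lemma ComplPair.map {p q : LieSubalgebra ℝ L} (hpq : ComplPair p q) :
    ComplPair (p.map (e : L →ₗ⁅ℝ⁆ L)) (q.map (e : L →ₗ⁅ℝ⁆ L)) := by
  simp only [ComplPair, killingPolar_map]
  exact ⟨(Submodule.orderIsoMapComap e.toLinearEquiv).isCompl hpq.1,
    (Submodule.orderIsoMapComap e.toLinearEquiv).isCompl hpq.2⟩

end Transport

section ExpAd

lemma pow_finrank_eq_zero_of_isNilpotent {K V : Type*} [Field K] [AddCommGroup V] [Module K V]
    [FiniteDimensional K V] {N : Module.End K V} (hN : IsNilpotent N) : N ^ finrank K V = 0 := by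
  have h := LinearMap.aeval_self_charpoly N
  rwa [hN.charpoly_eq_X_pow_finrank, map_pow, Polynomial.aeval_X] at h

lemma sum_eq_isNilpotentExp {A : Type*} [Ring A] [Module ℝ A] [Module ℚ A] {a : A} {n : ℕ}
    (hn : a ^ n = 0) :
    ∑ k ∈ Finset.range n, (k.factorial : ℝ)⁻¹ • a ^ k = IsNilpotent.exp a := by
  rw [IsNilpotent.exp_eq_sum hn]
  refine Finset.sum_congr rfl fun k _ => ?_
  rw [← Rat.cast_smul_eq_qsmul ℝ]
  push_cast
  rfl

/-- `IsNilpotent.exp` and `LieDerivation.exp` are stated over `ℚ`. -/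
noncomputable abbrev lieAlgebraRatOfReal : LieAlgebra ℚ L :=
  { Module.compHom L (algebraMap ℚ ℝ) with lie_smul := fun q x y => lie_smul (q : ℝ) x y }

attribute [local instance] lieAlgebraRatOfReal

variable [FiniteDimensional ℝ L] {x : L}

lemma expAd_eq_isNilpotentExp (hx : IsNilpotent (ad ℝ L x)) :
    expAd x = IsNilpotent.exp (ad ℝ L x) :=
  sum_eq_isNilpotentExp <| by rw [pow_succ, pow_finrank_eq_zero_of_isNilpotent hx, zero_mul]

lemma expAd_apply_of_ad_pow_three_eq_zero (hx : ad ℝ L x ^ 3 = 0) (v : L) :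
    expAd x v = v + ⁅x, v⁆ + (2 : ℝ)⁻¹ • ⁅x, ⁅x, v⁆⁆ := by
  rw [expAd_eq_isNilpotentExp ⟨3, hx⟩, ← sum_eq_isNilpotentExp hx]
  simp [Finset.sum_range_succ, pow_two]

lemma coe_expAd (hx : IsNilpotent (ad ℝ L x)) :
    ⇑(expAd x) = LieDerivation.exp (LieDerivation.ad ℝ L x) (by simpa using hx) := by
  ext v
  rw [LieDerivation.exp_map_apply, expAd_eq_isNilpotentExp hx]
  simp

lemma expAd_lie (hx : IsNilpotent (ad ℝ L x)) (a b : L) :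
    expAd x ⁅a, b⁆ = ⁅expAd x a, expAd x b⁆ := by
  simp only [coe_expAd hx, LieEquiv.map_lie]

lemma expAd_bijective (hx : IsNilpotent (ad ℝ L x)) : Function.Bijective (expAd x) := by
  rw [coe_expAd hx]
  exact LieEquiv.bijective _

end ExpAd

section Grading

variable {P Q : LieSubalgebra ℝ L}

structure IsGradingElement (P Q : LieSubalgebra ℝ L) (E : L) : Prop where
  lie_eq_neg : ∀ a ∈ killingPolar Q, ⁅E, a⁆ = -a
  lie_eq_zero : ∀ b ∈ P ⊓ Q, ⁅E, b⁆ = 0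
  lie_eq_self : ∀ c ∈ killingPolar P, ⁅E, c⁆ = c

lemma IsGradingElement.lie_add_add {E : L} (hE : IsGradingElement P Q E) {a b c : L}
    (ha : a ∈ killingPolar Q) (hb : b ∈ P ⊓ Q) (hc : c ∈ killingPolar P) :
    ⁅E, a + b + c⁆ = -a + c := by
  rw [lie_add, lie_add, hE.lie_eq_neg a ha, hE.lie_eq_zero b hb, hE.lie_eq_self c hc, add_zero]

namespace ComplPair

variable (hPQ : ComplPair P Q)
include hPQ

lemma eq_zero_of_mem_left {v : L} (hv : v ∈ P) (hv' : v ∈ killingPolar Q) : v = 0 :=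
  Submodule.disjoint_def.mp hPQ.1.disjoint v hv hv'

lemma eq_zero_of_mem_right {v : L} (hv : v ∈ Q) (hv' : v ∈ killingPolar P) : v = 0 :=
  Submodule.disjoint_def.mp hPQ.2.disjoint v hv hv'

omit hPQ in
noncomputable def gradingMap (hPQ : ComplPair P Q) : Module.End ℝ L :=
  (killingPolar P).projection Q.toSubmodule hPQ.2.symm -
    (killingPolar Q).projection P.toSubmodule hPQ.1.symm

lemma gradingMap_apply_of_mem_inf {b : L} (hb : b ∈ P ⊓ Q) : hPQ.gradingMap b = 0 := by
  simp [gradingMap, Submodule.projection_apply_of_mem_right _ hb.1,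
    Submodule.projection_apply_of_mem_right _ hb.2]

end ComplPair

end Grading

section Killing

variable [FiniteDimensional ℝ L] [IsKilling ℝ L]

lemma orthogonal_killingPolar (p : LieSubalgebra ℝ L) :
    (killingForm ℝ L).orthogonal (killingPolar p) = p.toSubmodule := by
  rw [killingPolar_eq_orthogonal]
  exact LinearMap.BilinForm.orthogonal_orthogonal (IsKilling.killingForm_nondegenerate ℝ L)
    (LieModule.traceForm_isSymm ℝ L L).isRefl _

lemma mem_of_forall_killingPolar {p : LieSubalgebra ℝ L} {v : L}
    (hv : ∀ z ∈ killingPolar p, killingForm ℝ L z v = 0) : v ∈ p := by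
  rw [← LieSubalgebra.mem_toSubmodule, ← orthogonal_killingPolar]
  exact hv

lemma eq_zero_of_forall_lie_eq_zero {y : L} (h : ∀ v : L, ⁅y, v⁆ = 0) : y = 0 := by
  have hy : y ∈ LieAlgebra.center ℝ L := fun v => by rw [← lie_skew, h, neg_zero]
  simpa [LieAlgebra.center_eq_bot] using hy

namespace IsH1Parabolic

variable {p : LieSubalgebra ℝ L} (hp : IsH1Parabolic p)
include hp

lemma lie_mem {x : L} (hx : x ∈ killingPolar p) (v : L) : ⁅x, v⁆ ∈ p :=
  mem_of_forall_killingPolar fun z hz => by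
    rw [← LieModule.traceForm_apply_lie_apply, hp z hz x hx, map_zero, LinearMap.zero_apply]

lemma lie_mem' {x : L} (hx : x ∈ killingPolar p) (v : L) : ⁅v, x⁆ ∈ p := by
  rw [← lie_skew]
  exact neg_mem (hp.lie_mem hx v)

lemma ad_pow_three_eq_zero {x : L} (hx : x ∈ killingPolar p) : ad ℝ L x ^ 3 = 0 := by
  ext v
  have h : ⁅x, ⁅x, ⁅x, v⁆⁆⁆ = 0 := hp x hx _ (lie_mem_killingPolar hx (hp.lie_mem hx v))
  simpa [pow_succ] using h

lemma killingForm_eq_zero {x y : L} (hx : x ∈ killingPolar p) (hy : y ∈ killingPolar p) :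
    killingForm ℝ L x y = 0 := by
  have hnil : IsNilpotent (ad ℝ L x ∘ₗ ad ℝ L y) := by
    refine ⟨2, LinearMap.ext fun v => ?_⟩
    have h : ⁅y, ⁅x, ⁅y, v⁆⁆⁆ = 0 := hp y hy _ (lie_mem_killingPolar hx (hp.lie_mem hy v))
    simp [pow_succ, h]
  rw [killingForm_apply_apply]
  exact (LinearMap.isNilpotent_trace_of_isNilpotent hnil).eq_zero

lemma killingPolar_le : killingPolar p ≤ p.toSubmodule := fun _ hx =>
  mem_of_forall_killingPolar fun _ hz => hp.killingForm_eq_zero hz hx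

lemma expAd_mem_iff {x : L} (hx : x ∈ killingPolar p) {v : L} : expAd x v ∈ p ↔ v ∈ p := by
  rw [expAd_apply_of_ad_pow_three_eq_zero (hp.ad_pow_three_eq_zero hx), add_assoc,
    add_mem_cancel_right (add_mem (hp.lie_mem hx v) (p.smul_mem _ (hp.lie_mem hx _)))]

end IsH1Parabolic

variable {P Q : LieSubalgebra ℝ L}

namespace ComplPair

variable (hPQ : ComplPair P Q) (hP : IsH1Parabolic P)
include hPQ hP

lemma exists_decomp (v : L) :
    ∃ a ∈ killingPolar Q, ∃ b ∈ P ⊓ Q, ∃ c ∈ killingPolar P, v = a + b + c := by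
  obtain ⟨u, hu, a, ha, rfl⟩ := Submodule.mem_sup.mp
    (hPQ.1.codisjoint.eq_top ▸ Submodule.mem_top : v ∈ P.toSubmodule ⊔ killingPolar Q)
  obtain ⟨b, hb, c, hc, rfl⟩ := Submodule.mem_sup.mp
    (hPQ.2.codisjoint.eq_top ▸ Submodule.mem_top : u ∈ Q.toSubmodule ⊔ killingPolar P)
  have hbP : b ∈ P := by simpa using sub_mem hu (hP.killingPolar_le hc)
  exact ⟨a, ha, b, ⟨hbP, hb⟩, c, hc, by abel⟩

lemma exists_decomp_of_mem_left {v : L} (hv : v ∈ P) :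
    ∃ b ∈ P ⊓ Q, ∃ c ∈ killingPolar P, v = b + c := by
  obtain ⟨a, ha, b, hb, c, hc, rfl⟩ := hPQ.exists_decomp hP v
  have haP : a ∈ P := by simpa using sub_mem hv (add_mem hb.1 (hP.killingPolar_le hc))
  rw [hPQ.eq_zero_of_mem_left haP ha, zero_add]
  exact ⟨b, hb, c, hc, rfl⟩

lemma gradingMap_apply_of_mem_killingPolar_left {c : L} (hc : c ∈ killingPolar P) :
    hPQ.gradingMap c = c := by
  simp [gradingMap, Submodule.projection_apply_of_mem_left _ hc,
    Submodule.projection_apply_of_mem_right _ (hP.killingPolar_le hc)]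

variable (hQ : IsH1Parabolic Q)
include hQ

omit hP in
lemma gradingMap_apply_of_mem_killingPolar_right {a : L} (ha : a ∈ killingPolar Q) :
    hPQ.gradingMap a = -a := by
  simp [gradingMap, Submodule.projection_apply_of_mem_left _ ha,
    Submodule.projection_apply_of_mem_right _ (hQ.killingPolar_le ha)]

lemma gradingMap_lie (u v : L) :
    hPQ.gradingMap ⁅u, v⁆ = ⁅hPQ.gradingMap u, v⁆ + ⁅u, hPQ.gradingMap v⁆ := by
  set D := hPQ.gradingMap
  have Da : ∀ a ∈ killingPolar Q, D a = -a := fun a ha =>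
    hPQ.gradingMap_apply_of_mem_killingPolar_right hQ ha
  have Db : ∀ b ∈ P ⊓ Q, D b = 0 := fun b hb => hPQ.gradingMap_apply_of_mem_inf hb
  have Dc : ∀ c ∈ killingPolar P, D c = c := fun c hc =>
    hPQ.gradingMap_apply_of_mem_killingPolar_left hP hc
  have hac : ∀ a ∈ killingPolar Q, ∀ c ∈ killingPolar P, ⁅a, c⁆ ∈ P ⊓ Q := fun a ha c hc =>
    ⟨hP.lie_mem' hc a, hQ.lie_mem ha c⟩
  have hA : ∀ a ∈ killingPolar Q, ∀ v, D ⁅a, v⁆ = ⁅D a, v⁆ + ⁅a, D v⁆ := by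
    intro a ha v
    obtain ⟨a', ha', b', hb', c', hc', rfl⟩ := hPQ.exists_decomp hP v
    simp only [lie_add, map_add, Da a ha, Da a' ha', Db b' hb', Dc c' hc', hQ a ha a' ha',
      Da _ (lie_mem_killingPolar ha hb'.2), Db _ (hac a ha c' hc'), map_zero, lie_zero, neg_lie,
      lie_neg]
    abel
  have hC : ∀ c ∈ killingPolar P, ∀ v, D ⁅c, v⁆ = ⁅D c, v⁆ + ⁅c, D v⁆ := by
    intro c hc v
    obtain ⟨a', ha', b', hb', c', hc', rfl⟩ := hPQ.exists_decomp hP v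
    have hca : ⁅c, a'⁆ ∈ P ⊓ Q := by rw [← lie_skew]; exact neg_mem (hac a' ha' c hc)
    simp only [lie_add, map_add, Dc c hc, Da a' ha', Db b' hb', Dc c' hc', hP c hc c' hc',
      Dc _ (lie_mem_killingPolar hc hb'.1), Db _ hca, map_zero, lie_zero, lie_neg]
    abel
  have hB : ∀ b ∈ P ⊓ Q, ∀ v, D ⁅b, v⁆ = ⁅D b, v⁆ + ⁅b, D v⁆ := by
    intro b hb v
    obtain ⟨a', ha', b', hb', c', hc', rfl⟩ := hPQ.exists_decomp hP v
    simp only [lie_add, map_add, Db b hb, Da a' ha', Db b' hb', Dc c' hc',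
      Da _ (lie_mem_killingPolar' hb.2 ha'), Db _ ((P ⊓ Q).lie_mem hb hb'),
      Dc _ (lie_mem_killingPolar' hb.1 hc'), zero_lie, lie_zero, lie_neg]
    abel
  obtain ⟨a, ha, b, hb, c, hc, rfl⟩ := hPQ.exists_decomp hP u
  simp only [add_lie, map_add, hA a ha, hB b hb, hC c hc]
  abel

lemma exists_isGradingElement : ∃ E, IsGradingElement P Q E := by
  let D : LieDerivation ℝ L L :=
    { toLinearMap := hPQ.gradingMap
      leibniz' := fun u v => by
        rw [hPQ.gradingMap_lie hP hQ, ← lie_skew (hPQ.gradingMap u) v]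
        abel }
  obtain ⟨E, hE⟩ := LieDerivation.IsKilling.exists_eq_ad D
  have hED : ∀ v, ⁅E, v⁆ = hPQ.gradingMap v := fun v => by
    have h : ⁅E, v⁆ = D v := by simpa using congr($hE v)
    exact h
  exact ⟨E, fun a ha => by rw [hED, hPQ.gradingMap_apply_of_mem_killingPolar_right hQ ha],
    fun b hb => by rw [hED, hPQ.gradingMap_apply_of_mem_inf hb],
    fun c hc => by rw [hED, hPQ.gradingMap_apply_of_mem_killingPolar_left hP hc]⟩

end ComplPair

namespace IsGradingElement

variable {E : L} (hE : IsGradingElement P Q E) (hPQ : ComplPair P Q) (hP : IsH1Parabolic P)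
include hE hPQ hP

lemma mem_inf : E ∈ P ⊓ Q := by
  obtain ⟨a, ha, b, hb, c, hc, hE'⟩ := hPQ.exists_decomp hP E
  have hac : -a + c = 0 := by rw [← hE.lie_add_add ha hb hc, ← hE', lie_self]
  have hca : a = c := neg_add_eq_zero.mp hac
  have ha0 : a = 0 := hPQ.eq_zero_of_mem_left (hca ▸ hP.killingPolar_le hc) ha
  rw [hE', ← hca, ha0, zero_add, add_zero]
  exact hb

lemma lie_mem_killingPolar_of_mem {v : L} (hv : v ∈ P) : ⁅E, v⁆ ∈ killingPolar P := by
  obtain ⟨b, hb, c, hc, rfl⟩ := hPQ.exists_decomp_of_mem_left hP hv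
  rw [lie_add, hE.lie_eq_zero b hb, hE.lie_eq_self c hc, zero_add]
  exact hc

lemma lie_add_self_mem (v : L) : ⁅E, v⁆ + v ∈ P := by
  obtain ⟨a, ha, b, hb, c, hc, rfl⟩ := hPQ.exists_decomp hP v
  rw [hE.lie_add_add ha hb hc, show -a + c + (a + b + c) = b + (2 : ℝ) • c by module]
  exact add_mem hb.1 (P.smul_mem 2 (hP.killingPolar_le hc))

lemma mem_right_iff (hQ : IsH1Parabolic Q) {v : L} :
    v ∈ Q ↔ ⁅E, ⁅E, v⁆⁆ + ⁅E, v⁆ = 0 := by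
  obtain ⟨a, ha, b, hb, c, hc, rfl⟩ := hPQ.exists_decomp hP v
  have h2c : ⁅E, ⁅E, a + b + c⁆⁆ + ⁅E, a + b + c⁆ = (2 : ℝ) • c := by
    rw [hE.lie_add_add ha hb hc, show -a + c = -a + 0 + c by abel,
      hE.lie_add_add (neg_mem ha) (zero_mem _) hc]
    module
  have hab : a + b ∈ Q := add_mem (hQ.killingPolar_le ha) hb.2
  rw [h2c, smul_eq_zero, or_iff_right two_ne_zero]
  exact (add_mem_cancel_left hab).trans
    ⟨fun h => hPQ.eq_zero_of_mem_right h hc, fun h => h ▸ zero_mem Q⟩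

end IsGradingElement

lemma IsGradingElement.sub_mem_killingPolar {Q₀ Q₁ : LieSubalgebra ℝ L} {E₀ E₁ : L}
    (h₀ : IsGradingElement P Q₀ E₀) (h₁ : IsGradingElement P Q₁ E₁) (hP : IsH1Parabolic P)
    (c₀ : ComplPair P Q₀) (c₁ : ComplPair P Q₁) : E₀ - E₁ ∈ killingPolar P := by
  obtain ⟨y, hy, z, hz, hyz⟩ :=
    c₁.exists_decomp_of_mem_left hP (sub_mem (h₀.mem_inf c₀ hP).1 (h₁.mem_inf c₁ hP).1)
  suffices y = 0 by rw [hyz, this, zero_add]; exact hz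
  have hy' : y = E₀ - E₁ - z := by rw [hyz]; abel
  -- `y` is central: it kills each piece of the grading of `(P, Q₁)`
  refine eq_zero_of_forall_lie_eq_zero fun v => ?_
  obtain ⟨a, ha, b, hb, c, hc, rfl⟩ := c₁.exists_decomp hP v
  have hya : ⁅y, a⁆ = 0 := by
    refine c₁.eq_zero_of_mem_left ?_ (lie_mem_killingPolar' hy.2 ha)
    rw [show ⁅y, a⁆ = (⁅E₀, a⁆ + a) - ⁅z, a⁆ by
      rw [hy', sub_lie, sub_lie, h₁.lie_eq_neg a ha]; abel]
    exact sub_mem (h₀.lie_add_self_mem c₀ hP a) (hP.lie_mem hz a)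
  have hyb : ⁅y, b⁆ = 0 := by
    refine c₁.eq_zero_of_mem_right (Q₁.lie_mem hy.2 hb.2) ?_
    rw [show ⁅y, b⁆ = ⁅E₀, b⁆ - ⁅z, b⁆ by
      rw [hy', sub_lie, sub_lie, h₁.lie_eq_zero b hb, sub_zero]]
    exact sub_mem (h₀.lie_mem_killingPolar_of_mem c₀ hP hb.1) (lie_mem_killingPolar hz hb.1)
  have hyc : ⁅y, c⁆ = 0 := by
    rw [hy', sub_lie, sub_lie, h₀.lie_eq_self c hc, h₁.lie_eq_self c hc, hP z hz c hc]
    abel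
  rw [lie_add, lie_add, hya, hyb, hyc, add_zero, add_zero]

lemma ComplPair.exists_expAd_image_eq {Q₀ Q₁ : LieSubalgebra ℝ L} (hP : IsH1Parabolic P)
    (hQ₀ : IsH1Parabolic Q₀) (hQ₁ : IsH1Parabolic Q₁) (c₀ : ComplPair P Q₀)
    (c₁ : ComplPair P Q₁) :
    ∃ x ∈ killingPolar P, expAd x '' P = P ∧ expAd x '' Q₀ = Q₁ := by
  obtain ⟨E₀, h₀⟩ := c₀.exists_isGradingElement hP hQ₀
  obtain ⟨E₁, h₁⟩ := c₁.exists_isGradingElement hP hQ₁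
  have hx := h₀.sub_mem_killingPolar h₁ hP c₀ c₁
  have hx3 := hP.ad_pow_three_eq_zero hx
  have hbij := expAd_bijective ⟨3, hx3⟩
  have hE : expAd (E₀ - E₁) E₀ = E₁ := by
    have h : ⁅E₀ - E₁, E₀⁆ = -(E₀ - E₁) := by rw [← lie_skew, h₀.lie_eq_self _ hx]
    rw [expAd_apply_of_ad_pow_three_eq_zero hx3, h, lie_neg, lie_self, neg_zero, smul_zero,
      add_zero]
    abel
  have hconj : ∀ v, expAd (E₀ - E₁) ⁅E₀, v⁆ = ⁅E₁, expAd (E₀ - E₁) v⁆ := fun v => by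
    rw [expAd_lie ⟨3, hx3⟩, hE]
  refine ⟨E₀ - E₁, hx, ((Set.preimage_eq_iff_eq_image hbij).mp ?_).symm,
    ((Set.preimage_eq_iff_eq_image hbij).mp ?_).symm⟩
  · ext v
    exact hP.expAd_mem_iff hx
  · ext v
    simp only [Set.mem_preimage, SetLike.mem_coe]
    rw [h₁.mem_right_iff c₁ hP hQ₁, h₀.mem_right_iff c₀ hP hQ₀, ← hconj, ← hconj, ← map_add,
      map_eq_zero_iff _ hbij.1]

end Killing

theorem transitive_on_complementary_pairs_general
    [FiniteDimensional ℝ L] [LieAlgebra.IsSemisimple ℝ L]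
    (p q p' q' : LieSubalgebra ℝ L)
    (hp : IsH1Parabolic p) (hq : IsH1Parabolic q)
    (hq' : IsH1Parabolic q')
    (hpq : ComplPair p q) (hpq' : ComplPair p' q')
    (h : L →ₗ⁅ℝ⁆ L) (hbij : Function.Bijective h) (hmap : p.map h = p') :
    ∃ x ∈ killingPolar p,
      Function.Bijective (⇑h ∘ ⇑(expAd x)) ∧
      (∀ a b : L, h (expAd x ⁅a, b⁆) = ⁅h (expAd x a), h (expAd x b)⁆) ∧
      (⇑h ∘ ⇑(expAd x)) '' (p : Set L) = (p' : Set L) ∧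
      (⇑h ∘ ⇑(expAd x)) '' (q : Set L) = (q' : Set L) := by
  set e := LieEquiv.ofBijective h hbij
  have hp' : p'.map (e.symm : L →ₗ⁅ℝ⁆ L) = p := by
    rw [← hmap]
    ext v
    simp [show ∀ a, e.symm (h a) = a from e.symm_apply_apply]
  obtain ⟨x, hx, hxp, hxq⟩ :=
    hpq.exists_expAd_image_eq hp hq (hq'.map e.symm) (hp' ▸ hpq'.map e.symm)
  have hnil : IsNilpotent (ad ℝ L x) := ⟨3, hp.ad_pow_three_eq_zero hx⟩
  refine ⟨x, hx, hbij.comp (expAd_bijective hnil),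
    fun a b => by rw [expAd_lie hnil, LieHom.map_lie], ?_, ?_⟩
  · rw [Set.image_comp, hxp, ← hmap]
    ext v
    simp
  · rw [Set.image_comp, hxq]
    ext v
    simp [show ∀ a, h (e.symm a) = a from e.apply_symm_apply]

/-- **Transitivity on the space of complementary pairs.** Given complementary pairs
`(𝔭, 𝔮)`, `(𝔭′, 𝔮′)` of height-one parabolic subalgebras and an automorphism `h` of
`𝔤` with `h(𝔭) = 𝔭′`, there is `x ∈ 𝔭^⊥` such that `g := h ∘ exp(ad x)` is an
automorphism of `𝔤` carrying `𝔭` to `𝔭′` and `𝔮` to `𝔮′`. -/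
theorem transitive_on_complementary_pairs
    [FiniteDimensional ℝ L] [LieAlgebra.IsSemisimple ℝ L]
    (p q p' q' : LieSubalgebra ℝ L)
    (hp : IsH1Parabolic p) (hq : IsH1Parabolic q)
    (hp' : IsH1Parabolic p') (hq' : IsH1Parabolic q')
    (hpq : ComplPair p q) (hpq' : ComplPair p' q')
    (h : L →ₗ⁅ℝ⁆ L) (hbij : Function.Bijective h) (hmap : p.map h = p') :
    ∃ x ∈ killingPolar p,
      Function.Bijective (⇑h ∘ ⇑(expAd x)) ∧
      (∀ a b : L, h (expAd x ⁅a, b⁆) = ⁅h (expAd x a), h (expAd x b)⁆) ∧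
      (⇑h ∘ ⇑(expAd x)) '' (p : Set L) = (p' : Set L) ∧
      (⇑h ∘ ⇑(expAd x)) '' (q : Set L) = (q' : Set L) :=
  transitive_on_complementary_pairs_general p q p' q' hp hq hq' hpq hpq' h hbij hmap
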